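/- The abelianization of the Fibonacci group F(2,n) is finite for every n ≥ 2, with order |f(n)| where f(n) can be expressed via Fibonacci-type recurrences; in particular the abelianization of F(2,9) is finite. -/

import Mathlib

/-- Relations of the Fibonacci group F(2,n): aᵢ a_{i+1} = a_{i+2}, indices mod n. -/
def fibRels (n : ℕ) [NeZero n] : Set (FreeGroup (Fin n)) :=
  {r | ∃ i : Fin n, r = FreeGroup.of i * FreeGroup.of (i + 1) * (FreeGroup.of (i + 2))⁻¹}

/-- The Fibonacci group F(2,n). -/
abbrev Fib (n : ℕ) [NeZero n] := PresentedGroup (fibRels n)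

/-!
In the abelianization the images `xᵢ` of the generators satisfy `xᵢ + xᵢ₊₁ = xᵢ₊₂`, hence
`xᵢ₊ₖ₊₁ = F_k xᵢ + F_{k+1} xᵢ₊₁`. Taking `k = n - 1` and `k = n` and using periodicity gives a
2 × 2 linear system for `xᵢ, xᵢ₊₁` whose determinant `(F_{n-1} - 1)(F_{n+1} - 1) - F_n²` equals
`(-1)ⁿ + 1 - F_{n-1} - F_{n+1}` by Cassini's identity, which is negative for `n ≥ 2`. So every
generator has finite order, and a finitely generated torsion abelian group is finite.
-/

theorem Nat.fib_sub_one_mul_fib_sub_one_sub_fib_sq_ne_zero (m : ℕ) :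
    ((Nat.fib (m + 1) : ℤ) - 1) * (Nat.fib (m + 3) - 1) - Nat.fib (m + 2) ^ 2 ≠ 0 := by
  have cassini := Int.fib_succ_mul_fib_pred_sub_fib_sq (m + 2 : ℕ)
  rw [← Nat.cast_succ, show ((m + 2 : ℕ) : ℤ) - 1 = (m + 1 : ℕ) by push_cast; ring,
    Int.natAbs_natCast] at cassini
  simp only [Int.fib_natCast] at cassini
  have h₁ : 1 ≤ Nat.fib (m + 1) := Nat.fib_pos.mpr m.succ_pos
  have h₃ : 2 ≤ Nat.fib (m + 3) := Nat.fib_mono (show 3 ≤ m + 3 by omega)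
  have hsign : (-1 : ℤ) ^ (m + 2) ≤ 1 := by
    rcases neg_one_pow_eq_or ℤ (m + 2) with h | h <;> simp [h]
  intro h
  have : (Nat.fib (m + 1) : ℤ) + Nat.fib (m + 3) = 1 + (-1) ^ (m + 2) := by
    linear_combination cassini - h
  omega

section FibonacciRecurrence

variable {G : Type*} {y : ℕ → G}

theorem eq_fib_smul_add_fib_smul_of_recurrence [AddCommMonoid G]
    (hy : ∀ k, y (k + 2) = y k + y (k + 1)) (k : ℕ) :
    y (k + 1) = Nat.fib k • y 0 + Nat.fib (k + 1) • y 1 := by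
  induction k using Nat.twoStepInduction with
  | zero => simp
  | one => simp [hy 0]
  | more k ih₀ ih₁ =>
    rw [hy, ih₀, ih₁]
    simp only [Nat.fib_add_two, add_smul]
    abel

theorem isOfFinAddOrder_of_recurrence_of_periodic [AddCommGroup G] {m : ℕ}
    (hy : ∀ k, y (k + 2) = y k + y (k + 1)) (hper : Function.Periodic y (m + 2)) :
    IsOfFinAddOrder (y 0) := by
  have e₀ : y 0 = Nat.fib (m + 1) • y 0 + Nat.fib (m + 2) • y 1 := by
    rw [← eq_fib_smul_add_fib_smul_of_recurrence hy, ← hper 0, zero_add]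
  have e₁ : y 1 = Nat.fib (m + 2) • y 0 + Nat.fib (m + 3) • y 1 := by
    rw [← eq_fib_smul_add_fib_smul_of_recurrence hy, ← hper 1, add_comm]
  simp only [← natCast_zsmul] at e₀ e₁
  refine isOfFinAddOrder_iff_zsmul_eq_zero.mpr
    ⟨_, Nat.fib_sub_one_mul_fib_sub_one_sub_fib_sq_ne_zero m, ?_⟩
  linear_combination (norm := module)
    (1 - (Nat.fib (m + 3) : ℤ)) • e₀ + (Nat.fib (m + 2) : ℤ) • e₁

end FibonacciRecurrence

theorem CommGroup.finite_of_closure_eq_top_of_isOfFinOrder {G : Type*} [CommGroup G] {s : Set G}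
    (hs : s.Finite) (hgen : Subgroup.closure s = ⊤) (htors : ∀ g ∈ s, IsOfFinOrder g) :
    Finite G :=
  have : Group.FG G := Group.fg_iff.mpr ⟨s, hgen, hs⟩
  CommGroup.finite_of_fg_isMulTorsion G fun g =>
    (Subgroup.closure_le (CommGroup.torsion G)).mpr htors (hgen ▸ Subgroup.mem_top g)

theorem Abelianization.closure_image_of_eq_top {G : Type*} [Group G] {s : Set G}
    (hs : Subgroup.closure s = ⊤) : Subgroup.closure (Abelianization.of '' s) = ⊤ := by
  rw [← MonoidHom.map_closure, hs, Subgroup.map_top_of_surjective]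
  exact QuotientGroup.mk_surjective

namespace Fib

variable {n : ℕ} [NeZero n]

theorem of_mul_of (i : Fin n) :
    (PresentedGroup.of i : Fib n) * PresentedGroup.of (i + 1) = PresentedGroup.of (i + 2) := by
  have := PresentedGroup.one_of_mem (rels := fibRels n) ⟨i, rfl⟩
  rwa [map_mul, map_mul, map_inv, mul_inv_eq_one] at this

open Fin.NatCast in
theorem isOfFinOrder_abelianization_of (hn : 2 ≤ n) (i : Fin n) :
    IsOfFinOrder (Abelianization.of (PresentedGroup.of i : Fib n)) := by
  obtain ⟨m, rfl⟩ : ∃ m, n = m + 2 := ⟨n - 2, by omega⟩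
  let y (k : ℕ) : Additive (Abelianization (Fib (m + 2))) :=
    .ofMul (Abelianization.of (PresentedGroup.of (i + (k : Fin (m + 2)))))
  have hy (k : ℕ) : y (k + 2) = y k + y (k + 1) := by
    simp only [y, Nat.cast_add, Nat.cast_one, Nat.cast_ofNat, ← add_assoc, ← ofMul_mul, ← map_mul,
      of_mul_of]
  have hper : Function.Periodic y (m + 2) := fun k => by simp [y]
  simpa [y] using isOfFinAddOrder_ofMul_iff.mp (isOfFinAddOrder_of_recurrence_of_periodic hy hper)

end Fib

/-- The abelianization of F(2,n) is finite for every n ≥ 2; in particular the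
abelianization of F(2,9) is finite. -/
theorem fib_abelianization_finite :
    (∀ (n : ℕ) [NeZero n], 2 ≤ n → Finite (Abelianization (Fib n))) ∧
      Finite (Abelianization (Fib 9)) := by
  have main (n : ℕ) [NeZero n] (hn : 2 ≤ n) : Finite (Abelianization (Fib n)) := by
    refine CommGroup.finite_of_closure_eq_top_of_isOfFinOrder
      ((Set.finite_range PresentedGroup.of).image _)
      (Abelianization.closure_image_of_eq_top (PresentedGroup.closure_range_of _)) ?_
    rintro _ ⟨_, ⟨i, rfl⟩, rfl⟩
    exact Fib.isOfFinOrder_abelianization_of hn i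
  exact ⟨main, main 9 (by norm_num)⟩
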